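/- arXiv:1701.07016 — 2 statements merged into one kernel-verified Lean document; each statement's English description precedes it below -/
import Mathlib

section
/- For every positive integer $n$, $\sum_{k=1}^{n} [2k]\, q^{n-k} \binom{2n}{n+k}_q = [n] \binom{2n}{n}_q$, where $[m] = 1+q+\cdots+q^{m-1}$ and $\binom{a}{b}_q$ denotes the Gaussian binomial coefficient, as an identity of polynomials in $q$. -/
/-!
Since `[n+k] = [n-k] + q^(n-k) [2k]`, the `k`-th summand is
`([n+k] - [n-k]) [2n choose n+k]`, and the absorption identities
`[n+k] [2n choose n+k] = [2n] [2n-1 choose n+k-1]` and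
`[n-k] [2n choose n+k] = [2n] [2n-1 choose n+k]` make the sum telescope to
`[2n] [2n-1 choose n] = [n] [2n choose n]`. The absorption identities follow from the
product formula `[n choose k] [k]! [n-k]! = [n]!`, cancelling in the domain `ℤ[q]`.
-/

open Polynomial Finset

/-- The `q`-integer `[n] = 1 + q + ⋯ + q^(n-1)` as a polynomial in `ℤ[q]`. -/
noncomputable def qint (n : ℕ) : Polynomial ℤ := ∑ i ∈ Finset.range n, Polynomial.X ^ i

/-- The Gaussian binomial coefficient `[n choose k]_q` in `ℤ[q]`, via the `q`-Pascal rule. -/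
noncomputable def qbinom : ℕ → ℕ → Polynomial ℤ
  | _, 0 => 1
  | 0, _ + 1 => 0
  | n + 1, k + 1 => qbinom n k + Polynomial.X ^ (k + 1) * qbinom n (k + 1)

lemma qbinom_zero_right (n : ℕ) : qbinom n 0 = 1 := by cases n <;> rfl

lemma qbinom_succ_succ (n k : ℕ) :
    qbinom (n + 1) (k + 1) = qbinom n k + X ^ (k + 1) * qbinom n (k + 1) := rfl

lemma qbinom_eq_zero_of_lt {n k : ℕ} (h : n < k) : qbinom n k = 0 := by
  induction n generalizing k with
  | zero => obtain ⟨k, rfl⟩ := Nat.exists_eq_succ_of_ne_zero h.ne'; rfl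
  | succ n ih =>
    obtain ⟨k, rfl⟩ := Nat.exists_eq_succ_of_ne_zero (by omega : k ≠ 0)
    rw [qbinom_succ_succ, ih (by omega), ih (by omega), mul_zero, add_zero]

lemma qint_zero : qint 0 = 0 := by simp [qint]

lemma qint_add (a b : ℕ) : qint (a + b) = qint a + X ^ a * qint b := by
  simp only [qint, sum_range_add, mul_sum, pow_add]

lemma eval_one_qint (n : ℕ) : (qint n).eval 1 = n := by simp [qint]

lemma qint_succ_ne_zero (n : ℕ) : qint (n + 1) ≠ 0 := fun h => by
  have := congrArg (eval 1) h
  rw [eval_one_qint, eval_zero] at this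
  omega

noncomputable def qfact (n : ℕ) : ℤ[X] := ∏ i ∈ range n, qint (i + 1)

lemma qfact_zero : qfact 0 = 1 := prod_range_zero _

lemma qfact_succ (n : ℕ) : qfact (n + 1) = qint (n + 1) * qfact n := by
  rw [qfact, prod_range_succ, mul_comm, qfact]

lemma qfact_ne_zero (n : ℕ) : qfact n ≠ 0 :=
  prod_ne_zero_iff.mpr fun i _ => qint_succ_ne_zero i

lemma qbinom_mul_qfact_mul_qfact {n k : ℕ} (hk : k ≤ n) :
    qbinom n k * qfact k * qfact (n - k) = qfact n := by
  induction n generalizing k with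
  | zero => simp [Nat.le_zero.mp hk, qbinom_zero_right, qfact_zero]
  | succ n ih =>
    rcases k with _ | k
    · simp [qbinom_zero_right, qfact_zero]
    have hleft := ih (k := k) (by omega)
    have hright : qbinom n (k + 1) * qfact (k + 1) * qfact (n - k) = qint (n - k) * qfact n := by
      rcases Nat.lt_or_ge k n with hkn | hkn
      · have hfact : qfact (n - k) = qint (n - k) * qfact (n - (k + 1)) := by
          rw [show n - k = n - (k + 1) + 1 by omega, qfact_succ]
        linear_combination qint (n - k) * ih (k := k + 1) hkn
          + qbinom n (k + 1) * qfact (k + 1) * hfact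
      · rw [qbinom_eq_zero_of_lt (by omega), show n - k = 0 by omega, qint_zero]
        ring
    have hsplit : qint (n + 1) = qint (k + 1) + X ^ (k + 1) * qint (n - k) := by
      rw [← qint_add, show k + 1 + (n - k) = n + 1 by omega]
    rw [qbinom_succ_succ, Nat.add_sub_add_right, qfact_succ n]
    linear_combination qint (k + 1) * hleft + X ^ (k + 1) * hright - qfact n * hsplit
      + (qbinom n k * qfact (n - k)) * qfact_succ k

lemma qint_succ_mul_qbinom_succ_succ (n k : ℕ) :
    qint (k + 1) * qbinom (n + 1) (k + 1) = qint (n + 1) * qbinom n k := by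
  rcases Nat.lt_or_ge n k with hnk | hkn
  · rw [qbinom_eq_zero_of_lt hnk, qbinom_eq_zero_of_lt (by omega), mul_zero, mul_zero]
  apply mul_right_cancel₀ (mul_ne_zero (qfact_ne_zero k) (qfact_ne_zero (n - k)))
  have hbig := qbinom_mul_qfact_mul_qfact (by omega : k + 1 ≤ n + 1)
  rw [Nat.add_sub_add_right, qfact_succ, qfact_succ] at hbig
  linear_combination hbig - qint (n + 1) * qbinom_mul_qfact_mul_qfact hkn

lemma qint_sub_mul_qbinom_succ (n k : ℕ) :
    qint (n + 1 - k) * qbinom (n + 1) k = qint (n + 1) * qbinom n k := by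
  rcases Nat.lt_or_ge n k with hnk | hkn
  · rw [qbinom_eq_zero_of_lt hnk, mul_zero]
    rcases (Nat.succ_le_of_lt hnk).eq_or_lt with rfl | hnk'
    · rw [Nat.sub_self, qint_zero, zero_mul]
    · rw [qbinom_eq_zero_of_lt hnk', mul_zero]
  apply mul_right_cancel₀ (mul_ne_zero (qfact_ne_zero k) (qfact_ne_zero (n - k)))
  have hbig := qbinom_mul_qfact_mul_qfact (Nat.le_succ_of_le hkn)
  rw [show n + 1 - k = n - k + 1 by omega, qfact_succ, qfact_succ] at hbig
  rw [show n + 1 - k = n - k + 1 by omega]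
  linear_combination hbig - qint (n + 1) * qbinom_mul_qfact_mul_qfact hkn

lemma qint_sub_qint_mul_qbinom_succ_succ (n k : ℕ) :
    (qint (k + 1) - qint (n - k)) * qbinom (n + 1) (k + 1)
      = qint (n + 1) * (qbinom n k - qbinom n (k + 1)) := by
  have hlower := qint_sub_mul_qbinom_succ n (k + 1)
  rw [Nat.add_sub_add_right] at hlower
  linear_combination qint_succ_mul_qbinom_succ_succ n k - hlower

theorem stmt_0_general (n : ℕ) :
    ∑ k ∈ Finset.Icc 1 n, qint (2 * k) * Polynomial.X ^ (n - k) * qbinom (2 * n) (n + k)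
      = qint n * qbinom (2 * n) n := by
  rcases n with _ | m
  · simp [qint_zero]
  set N := 2 * m + 1
  have hN : 2 * (m + 1) = N + 1 := by omega
  have hterm : ∀ i ∈ range (m + 1),
      qint (2 * (i + 1)) * X ^ (m + 1 - (i + 1)) * qbinom (2 * (m + 1)) (m + 1 + (i + 1))
        = qint (N + 1) * (qbinom N (m + 1 + i) - qbinom N (m + 1 + (i + 1))) := by
    intro i hi
    rw [mem_range] at hi
    have hsplit : qint (m + 1 + i + 1) = qint (m - i) + X ^ (m - i) * qint (2 * (i + 1)) := by
      rw [← qint_add]; congr 1; omega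
    have hdiff := qint_sub_qint_mul_qbinom_succ_succ N (m + 1 + i)
    rw [show N - (m + 1 + i) = m - i by omega, hsplit] at hdiff
    rw [← add_assoc, hN, ← hdiff, show m + 1 - (i + 1) = m - i by omega]
    ring
  have hIcc : Icc 1 (m + 1) = (range (m + 1)).map (addRightEmbedding 1) := by
    rw [Nat.range_succ_eq_Icc_zero, map_add_right_Icc, zero_add]
  have hcentral := qint_sub_mul_qbinom_succ N (m + 1)
  rw [show N + 1 - (m + 1) = m + 1 by omega] at hcentral
  rw [hIcc, sum_map]
  simp only [addRightEmbedding_apply]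
  rw [sum_congr rfl hterm, ← mul_sum, sum_range_sub' (fun i => qbinom N (m + 1 + i)), add_zero,
    qbinom_eq_zero_of_lt (by omega : N < m + 1 + (m + 1)), sub_zero, hN, hcentral]

theorem stmt_0 (n : ℕ) (hn : 0 < n) :
    ∑ k ∈ Finset.Icc 1 n, qint (2 * k) * Polynomial.X ^ (n - k) * qbinom (2 * n) (n + k)
      = qint n * qbinom (2 * n) n :=
  stmt_0_general n
end

section
/- For all positive integers $n$ and every non-negative integer $r$, the integer $\frac{2}{n^2}\binom{2n}{n}^{-1}\sum_{k=1}^{n} \binom{2n}{n-k} k^{2r+3}$ is an integer; that is, $n^2 \binom{2n}{n}$ divides $2\sum_{k=1}^{n} k^{2r+3}\binom{2n}{n-k}$. -/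
/-!
Put `S_m(n) = ∑_{k ≤ n} k^m C(2n, n+k)`. The identity
`((n+1)^2 - k^2) C(2n+2, n+1+k) = 2(n+1)(2n+1) C(2n, n+k)` gives the recurrence
`S_{m+2}(n+1) = (n+1)^2 S_m(n+1) - 2(n+1)(2n+1) S_m(n)`, and at `k = 0` it reads
`(n+1)^2 C(2n+2, n+1) = 2(n+1)(2n+1) C(2n, n)`. Hence `n C(2n, n) ∣ 2 S_m(n)` for all `n`
implies `n^2 C(2n, n) ∣ 2 S_{m+2}(n)` for all `n`, and the induction on odd `m` starts from
the telescoping evaluation `2 S_1(n) = n C(2n, n)`.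
-/

open Finset

lemma sub_mul_choose_add_one (N j : ℕ) :
    ((N : ℤ) + 1 - j) * (N + 1).choose j = (N + 1) * N.choose j := by
  rcases le_or_gt j (N + 1) with hj | hj
  · have h := Nat.choose_mul_succ_eq N j
    have h' : (N.choose j : ℤ) * (N + 1) = (N + 1).choose j * ((N + 1 - j : ℕ) : ℤ) := by
      exact_mod_cast h
    rw [Nat.cast_sub hj] at h'
    push_cast at h'
    linear_combination -h'
  · simp [Nat.choose_eq_zero_of_lt hj, Nat.choose_eq_zero_of_lt (show N < j by omega)]

/-- Uses `C(2n, n+k)` rather than `C(2n, n-k)`, so that terms with `k > n` vanish instead of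
being distorted by truncated subtraction. -/
def binomMoment (m n : ℕ) : ℤ := ∑ k ∈ range (n + 1), (k : ℤ) ^ m * (2 * n).choose (n + k)

lemma two_mul_binomMoment_one (n : ℕ) : 2 * binomMoment 1 n = n * (2 * n).choose n := by
  -- `2k C(2n, n+k) = f k - f (k+1)`, so the sum telescopes.
  set f : ℕ → ℤ := fun k => (n + k : ℕ) * (2 * n).choose (n + k)
  have hterm : ∀ k ∈ range (n + 1),
      2 * ((k : ℤ) ^ 1 * (2 * n).choose (n + k)) = f k - f (k + 1) := by
    intro k hk
    have hkn : k ≤ n := Nat.lt_succ_iff.mp (mem_range.mp hk)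
    have h := Nat.choose_succ_right_eq (2 * n) (n + k)
    rw [show 2 * n - (n + k) = n - k by omega] at h
    have h' : ((2 * n).choose (n + k + 1) : ℤ) * (n + k + 1) =
        (2 * n).choose (n + k) * (n - k) := by
      exact_mod_cast h
    simp only [f]
    push_cast
    rw [← add_assoc]
    linear_combination h'
  rw [binomMoment, mul_sum, sum_congr rfl hterm, sum_range_sub']
  simp [f, Nat.choose_eq_zero_of_lt (show 2 * n < n + (n + 1) by omega)]

lemma sq_sub_sq_mul_choose (n k : ℕ) :
    (((n : ℤ) + 1) ^ 2 - k ^ 2) * (2 * (n + 1)).choose (n + 1 + k) =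
      2 * (n + 1) * (2 * n + 1) * (2 * n).choose (n + k) := by
  have h := Nat.add_one_mul_choose_eq (2 * n + 1) (n + k)
  rw [show 2 * n + 1 + 1 = 2 * (n + 1) by ring, show n + k + 1 = n + 1 + k by ring] at h
  have h' : (2 * ((n : ℤ) + 1)) * (2 * n + 1).choose (n + k) =
      (2 * (n + 1)).choose (n + 1 + k) * (n + 1 + k) := by
    exact_mod_cast h
  have h2 := sub_mul_choose_add_one (2 * n) (n + k)
  push_cast at h2
  linear_combination (k - (n : ℤ) - 1) * h' + 2 * (n + 1) * h2

lemma binomMoment_add_two (m n : ℕ) :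
    binomMoment (m + 2) (n + 1) =
      (n + 1) ^ 2 * binomMoment m (n + 1) - 2 * (n + 1) * (2 * n + 1) * binomMoment m n := by
  have hlast :
      binomMoment m n = ∑ k ∈ range (n + 2), (k : ℤ) ^ m * (2 * n).choose (n + k) := by
    rw [sum_range_succ, Nat.choose_eq_zero_of_lt (show 2 * n < n + (n + 1) by omega)]
    simp [binomMoment]
  rw [hlast, binomMoment, binomMoment, mul_sum, mul_sum, ← sum_sub_distrib]
  refine sum_congr rfl fun k _ => ?_
  linear_combination -(k : ℤ) ^ m * sq_sub_sq_mul_choose n k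

lemma sq_mul_centralBinom_dvd_binomMoment_add_two {m : ℕ}
    (h : ∀ n : ℕ, (n : ℤ) * (2 * n).choose n ∣ 2 * binomMoment m n) (n : ℕ) :
    (n : ℤ) ^ 2 * (2 * n).choose n ∣ 2 * binomMoment (m + 2) n := by
  cases n with
  | zero => simp [binomMoment]
  | succ n =>
    have hcentral : ((n + 1 : ℕ) : ℤ) ^ 2 * (2 * (n + 1)).choose (n + 1) =
        2 * (n + 1) * (2 * n + 1) * (2 * n).choose n := by
      simpa using sq_sub_sq_mul_choose n 0
    rw [binomMoment_add_two, mul_sub]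
    apply dvd_sub
    · have := mul_dvd_mul (dvd_pow_self ((n + 1 : ℕ) : ℤ) two_ne_zero) (h (n + 1))
      convert this using 1 <;> push_cast <;> ring
    · rw [hcentral, mul_left_comm]
      exact mul_dvd_mul_left _ ((dvd_mul_left _ _).trans (h n))

lemma sq_mul_centralBinom_dvd_binomMoment (r n : ℕ) :
    (n : ℤ) ^ 2 * (2 * n).choose n ∣ 2 * binomMoment (2 * r + 3) n := by
  induction r generalizing n with
  | zero =>
    exact sq_mul_centralBinom_dvd_binomMoment_add_two
      (fun n => (two_mul_binomMoment_one n).symm ▸ dvd_rfl) n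
  | succ r ih =>
    exact sq_mul_centralBinom_dvd_binomMoment_add_two
      (fun n => (Dvd.intro_left _ (by ring)).trans (ih n)) n

lemma sum_Icc_mul_choose_sub_eq_binomMoment {m : ℕ} (hm : m ≠ 0) (n : ℕ) :
    ∑ k ∈ Icc 1 n, (k : ℤ) ^ m * (2 * n).choose (n - k) = binomMoment m n := by
  rw [binomMoment, range_eq_Ico, sum_eq_sum_Ico_succ_bot (by omega : 0 < n + 1),
    Ico_add_one_right_eq_Icc]
  simp only [Nat.cast_zero, zero_pow hm, zero_mul, zero_add]
  refine sum_congr rfl fun k hk => ?_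
  have hkn : k ≤ n := (mem_Icc.mp hk).2
  rw [Nat.choose_symm_of_eq_add (show 2 * n = (n - k) + (n + k) by omega)]

theorem stmt_12_general (n r : ℕ) :
    ((n : ℤ) ^ 2 * (Nat.choose (2 * n) n : ℤ)) ∣
      2 * ∑ k ∈ Finset.Icc 1 n, (k : ℤ) ^ (2 * r + 3) * (Nat.choose (2 * n) (n - k) : ℤ) := by
  rw [sum_Icc_mul_choose_sub_eq_binomMoment (by omega)]
  exact sq_mul_centralBinom_dvd_binomMoment r n

theorem stmt_12 (n r : ℕ) (hn : 0 < n) :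
    ((n : ℤ) ^ 2 * (Nat.choose (2 * n) n : ℤ)) ∣
      2 * ∑ k ∈ Finset.Icc 1 n, (k : ℤ) ^ (2 * r + 3) * (Nat.choose (2 * n) (n - k) : ℤ) :=
  stmt_12_general n r
end
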